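/- In the generalized Fabrykowski-Gupta group Γ_p, with sᵢ = r^{aⁱ} = a^{-i}·r·aⁱ for i ∈ ℤ/pℤ, the following relations hold: a^p = 1; [sᵢ^{s_{i-1}ⁿ}, sⱼ^{s_{j-1}^m}] = 1 whenever 2 ≤ |i−j| ≤ p−2 (indices mod p) and m, n ≥ 0; and sᵢ^{s_{i-1}^{n+1}} = sᵢ^{s_{i-1}ⁿ·s_{i-1}^{s_{i-2}^m}} for all i ∈ ℤ/pℤ and m, n ≥ 0. -/

import Mathlib

namespace SelfSim

variable (p : ℕ)

/-- The rooted-tree automorphism `a` : `a(xw) = (x+1)w`. -/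
def aFun : List (ZMod p) → List (ZMod p)
  | [] => []
  | x :: w => (x + 1) :: w

def aInv : List (ZMod p) → List (ZMod p)
  | [] => []
  | x :: w => (x - 1) :: w

lemma aInv_aFun : ∀ l, aInv p (aFun p l) = l := by
  rintro (_ | ⟨x, w⟩) <;> simp [aFun, aInv]

lemma aFun_aInv : ∀ l, aFun p (aInv p l) = l := by
  rintro (_ | ⟨x, w⟩) <;> simp [aFun, aInv]

/-- `a` as a permutation of `X* = List (ZMod p)`. -/
def a : Equiv.Perm (List (ZMod p)) where
  toFun := aFun p
  invFun := aInv p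
  left_inv := aInv_aFun p
  right_inv := aFun_aInv p

/-- `r(0w) = 0 r(w)`, `r(1w) = 1 a(w)`, `r(xw) = xw` otherwise. -/
def rFun : List (ZMod p) → List (ZMod p)
  | [] => []
  | x :: w => if x = 0 then 0 :: rFun w else if x = 1 then 1 :: aFun p w else x :: w

def rInv : List (ZMod p) → List (ZMod p)
  | [] => []
  | x :: w => if x = 0 then 0 :: rInv w else if x = 1 then 1 :: aInv p w else x :: w

/-- `r` as a permutation of `X* = List (ZMod p)` (for `p ≥ 3`, so that
`0 ≠ 1` in `ZMod p`). -/
def r (hp : 3 ≤ p) : Equiv.Perm (List (ZMod p)) where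
  toFun := rFun p
  invFun := rInv p
  left_inv := by
    haveI : Fact (1 < p) := ⟨by omega⟩
    intro l
    induction l with
    | nil => rfl
    | cons x w ih =>
      by_cases h0 : x = 0
      · simp [rFun, rInv, h0, ih]
      · by_cases h1 : x = 1
        · simp [rFun, rInv, h0, h1, one_ne_zero, aInv_aFun]
        · simp [rFun, rInv, h0, h1]
  right_inv := by
    haveI : Fact (1 < p) := ⟨by omega⟩
    intro l
    induction l with
    | nil => rfl
    | cons x w ih =>
      by_cases h0 : x = 0
      · simp [rFun, rInv, h0, ih]
      · by_cases h1 : x = 1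
        · simp [rFun, rInv, h0, h1, one_ne_zero, aFun_aInv]
        · simp [rFun, rInv, h0, h1]

/-- `t(0w) = 0 t(w)`, `t(xw) = x aˣ(w)` for `x ≠ 0`. -/
def tFun : List (ZMod p) → List (ZMod p)
  | [] => []
  | x :: w => if x = 0 then 0 :: tFun w else x :: (aFun p)^[x.val] w

def tInv : List (ZMod p) → List (ZMod p)
  | [] => []
  | x :: w => if x = 0 then 0 :: tInv w else x :: (aInv p)^[x.val] w

/-- `t` as a permutation of `X* = List (ZMod p)`. -/
def t : Equiv.Perm (List (ZMod p)) where
  toFun := tFun p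
  invFun := tInv p
  left_inv := by
    intro l
    induction l with
    | nil => rfl
    | cons x w ih =>
      by_cases h0 : x = 0
      · simp [tFun, tInv, h0, ih]
      · simp [tFun, tInv, h0,
          (Function.LeftInverse.iterate (aInv_aFun p) x.val) w]
  right_inv := by
    intro l
    induction l with
    | nil => rfl
    | cons x w ih =>
      by_cases h0 : x = 0
      · simp [tFun, tInv, h0, ih]
      · simp [tFun, tInv, h0,
          (Function.LeftInverse.iterate (aFun_aInv p) x.val) w]

end SelfSim

open SelfSim

/-- Conjugation `g ^ h = h⁻¹ g h`. -/
def cnj {G : Type*} [Group G] (g h : G) : G := h⁻¹ * g * h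

/-- The commutator `[g, h] = g⁻¹ h⁻¹ g h`. -/
def pbra {G : Type*} [Group G] (g h : G) : G := g⁻¹ * h⁻¹ * g * h

/-- `sᵢ = r^{aⁱ} = a⁻ⁱ·r·aⁱ` in the generalized Fabrykowski-Gupta group
`Γ_p ≤ Perm(X*)` (indices `i ∈ ℤ/pℤ`). -/
def sFG (p : ℕ) (hp : 3 ≤ p) (i : ZMod p) : Equiv.Perm (List (ZMod p)) :=
  cnj (SelfSim.r p hp) (SelfSim.a p ^ i.val)


/-!
The generators `sᵢ` act only at the first-level vertices `-i` and `1 - i` (by `r` and by `a`),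
so the relations are statements about rigid stabilisers of first-level vertices: elements supported
below disjoint sets of vertices commute, and the elements supported below a given set form a
subgroup normalised by the first-level stabiliser. For the last family, `sᵢ₋₂ᵐ` fixes the subtree at `1 - i`, so on that subtree
`sᵢ₋₁^{sᵢ₋₂ᵐ}` agrees with `sᵢ₋₁`; hence `sᵢ₋₁^{sᵢ₋₂ᵐ} sᵢ₋₁⁻¹` is supported below `2 - i` alone
and commutes with `sᵢ^{sᵢ₋₁ⁿ}`, which is supported below `-i` and `1 - i`.
-/

section Conjugation

variable {G : Type*} [Group G]

lemma cnj_mul (g u v : G) : cnj g (u * v) = cnj (cnj g u) v := by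
  simp only [cnj, mul_inv_rev, mul_assoc]

lemma cnj_eq_self_of_commute {g h : G} (hc : Commute g h) : cnj g h = g := by
  rw [cnj, mul_assoc, hc.eq, inv_mul_cancel_left]

lemma pbra_eq_one_of_commute {g h : G} (hc : Commute g h) : pbra g h = 1 := by
  rw [pbra, mul_assoc _ g, hc.eq]
  group

end Conjugation

lemma ZMod.natCast_ne_zero_of_pos_of_lt {p k : ℕ} (hk : 0 < k) (hkp : k < p) :
    (k : ZMod p) ≠ 0 := by
  rw [Ne, ZMod.natCast_eq_zero_iff]
  exact fun hd => absurd (Nat.le_of_dvd hk hd) (by omega)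

section RigidStabilizer

variable {α : Type*}

/-- The rigid stabiliser of the set `S` of first-level vertices of the tree `List α`. -/
def rist (S : Set α) : Subgroup (Equiv.Perm (List α)) where
  carrier := {f | (∀ l, (f l).head? = l.head?) ∧ ∀ x ∉ S, ∀ w, f (x :: w) = x :: w}
  one_mem' := ⟨fun _ => rfl, fun _ _ _ => rfl⟩
  mul_mem' := fun {f g} hf hg =>
    ⟨fun l => by rw [Equiv.Perm.mul_apply, hf.1, hg.1],
      fun x hx w => by rw [Equiv.Perm.mul_apply, hg.2 x hx w, hf.2 x hx w]⟩
  inv_mem' := fun {f} hf =>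
    ⟨fun l => by rw [← hf.1, Equiv.Perm.coe_inv, Equiv.apply_symm_apply],
      fun x hx w => Equiv.Perm.inv_eq_iff_eq.mpr (hf.2 x hx w).symm⟩

variable {S T : Set α} {f g h : Equiv.Perm (List α)}

lemma exists_apply_cons_of_mem_rist (hf : f ∈ rist S) (x : α) (w : List α) :
    ∃ w', f (x :: w) = x :: w' :=
  List.head?_eq_some_iff.mp (hf.1 (x :: w))

lemma apply_cons_of_mem_rist_of_notMem (hf : f ∈ rist S) {x : α} (hx : x ∉ S) (w : List α) :
    f (x :: w) = x :: w :=
  hf.2 x hx w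

lemma apply_nil_of_mem_rist (hf : f ∈ rist S) : f [] = [] :=
  List.head?_eq_none_iff.mp (hf.1 [])

lemma commute_of_mem_rist_of_disjoint (hf : f ∈ rist S) (hg : g ∈ rist T)
    (hST : Disjoint S T) : Commute f g := by
  have key : ∀ {f g : Equiv.Perm (List α)} {S T : Set α}, f ∈ rist S → g ∈ rist T →
      ∀ x ∉ S, ∀ w, f (g (x :: w)) = g (f (x :: w)) := by
    intro f g S T hf hg x hx w
    obtain ⟨w', hw'⟩ := exists_apply_cons_of_mem_rist hg x w
    rw [apply_cons_of_mem_rist_of_notMem hf hx, hw', apply_cons_of_mem_rist_of_notMem hf hx]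
  refine Equiv.ext fun l => ?_
  rcases l with _ | ⟨x, w⟩
  · simp only [Equiv.Perm.mul_apply, apply_nil_of_mem_rist hf, apply_nil_of_mem_rist hg]
  · by_cases hx : x ∈ S
    · exact (key hg hf x (Set.disjoint_left.mp hST hx) w).symm
    · exact key hf hg x hx w

lemma cnj_mem_rist (hf : f ∈ rist S) (hh : h ∈ rist T) : cnj f h ∈ rist S := by
  refine ⟨fun l => ?_, fun x hx w => ?_⟩
  · simp only [cnj, Equiv.Perm.mul_apply, ((rist T).inv_mem hh).1, hf.1, hh.1]
  · obtain ⟨w', hw'⟩ := exists_apply_cons_of_mem_rist hh x w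
    rw [cnj, Equiv.Perm.mul_apply, Equiv.Perm.mul_apply, hw',
      apply_cons_of_mem_rist_of_notMem hf hx, ← hw', Equiv.Perm.coe_inv, Equiv.symm_apply_apply]

lemma cnj_apply_cons_of_notMem (hf : f ∈ rist T) (hh : h ∈ rist S) {x : α} (hx : x ∉ S)
    (w : List α) : cnj f h (x :: w) = f (x :: w) := by
  obtain ⟨w', hw'⟩ := exists_apply_cons_of_mem_rist hf x w
  rw [cnj, Equiv.Perm.mul_apply, Equiv.Perm.mul_apply, apply_cons_of_mem_rist_of_notMem hh hx,
    hw', apply_cons_of_mem_rist_of_notMem ((rist S).inv_mem hh) hx]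

lemma mul_inv_mem_rist_of_eqOn_cons {x : α} (hf : f ∈ rist (insert x S))
    (hg : g ∈ rist (insert x S)) (hfg : ∀ w, f (x :: w) = g (x :: w)) : f * g⁻¹ ∈ rist S := by
  have hfg' : f * g⁻¹ ∈ rist (insert x S) := mul_mem hf ((rist _).inv_mem hg)
  refine ⟨hfg'.1, fun y hy w => ?_⟩
  by_cases hyx : y = x
  · subst hyx
    obtain ⟨w', hw'⟩ := exists_apply_cons_of_mem_rist ((rist _).inv_mem hg) y w
    rw [Equiv.Perm.mul_apply, hw', hfg, ← hw', Equiv.Perm.coe_inv, Equiv.apply_symm_apply]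
  · exact hfg'.2 y (by simp [hyx, hy]) w

end RigidStabilizer

namespace SelfSim

variable {p : ℕ}

lemma a_pow_apply_nil (n : ℕ) : (a p ^ n) [] = [] := by
  induction n with
  | zero => rfl
  | succ n ih => rw [pow_succ, Equiv.Perm.mul_apply]; exact ih

lemma a_pow_apply_cons (n : ℕ) (x : ZMod p) (w : List (ZMod p)) :
    (a p ^ n) (x :: w) = (x + n) :: w := by
  induction n generalizing x with
  | zero => simp
  | succ n ih =>
    rw [pow_succ, Equiv.Perm.mul_apply, show a p (x :: w) = (x + 1) :: w from rfl, ih]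
    push_cast
    ring_nf

lemma a_pow_eq_one : a p ^ p = 1 := by
  refine Equiv.ext fun l => ?_
  rcases l with _ | ⟨x, w⟩
  · exact a_pow_apply_nil p
  · rw [a_pow_apply_cons, ZMod.natCast_self, add_zero]; rfl

lemma r_mem_rist (hp : 3 ≤ p) : r p hp ∈ rist {0, 1} := by
  refine ⟨fun l => ?_, fun x hx w => ?_⟩
  · rcases l with _ | ⟨x, w⟩
    · rfl
    · change (rFun p (x :: w)).head? = some x
      simp only [rFun]
      split_ifs with h0 h1
      · simp [h0]
      · simp [h1]
      · rfl
  · simp only [Set.mem_insert_iff, Set.mem_singleton_iff, not_or] at hx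
    change rFun p (x :: w) = x :: w
    simp only [rFun, if_neg hx.1, if_neg hx.2]

lemma cnj_a_pow_mem_rist {f : Equiv.Perm (List (ZMod p))} {S : Set (ZMod p)} (hf : f ∈ rist S)
    (n : ℕ) : cnj f (a p ^ n) ∈ rist ((· + (n : ZMod p)) ⁻¹' S) := by
  have inv_apply : ∀ x w, (a p ^ n)⁻¹ ((x + n) :: w) = x :: w := fun x w =>
    Equiv.Perm.inv_eq_iff_eq.mpr (a_pow_apply_cons n x w).symm
  refine ⟨fun l => ?_, fun x hx w => ?_⟩
  · rcases l with _ | ⟨x, w⟩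
    · simp only [cnj, Equiv.Perm.mul_apply, a_pow_apply_nil, apply_nil_of_mem_rist hf,
        Equiv.Perm.inv_eq_iff_eq.mpr (a_pow_apply_nil n).symm]
    · obtain ⟨w', hw'⟩ := exists_apply_cons_of_mem_rist hf (x + n) w
      simp only [cnj, Equiv.Perm.mul_apply, a_pow_apply_cons, hw', inv_apply, List.head?_cons]
  · rw [cnj, Equiv.Perm.mul_apply, Equiv.Perm.mul_apply, a_pow_apply_cons,
      apply_cons_of_mem_rist_of_notMem hf hx, inv_apply]

lemma sFG_mem_rist (hp : 3 ≤ p) (i : ZMod p) : sFG p hp i ∈ rist {-i, 1 - i} := by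
  have : NeZero p := ⟨by omega⟩
  have hS : ((· + (i.val : ZMod p)) ⁻¹' {0, 1} : Set (ZMod p)) = {-i, 1 - i} := by
    ext x
    simp only [ZMod.natCast_zmod_val, Set.mem_preimage, Set.mem_insert_iff,
      Set.mem_singleton_iff, eq_neg_iff_add_eq_zero, eq_sub_iff_add_eq]
  rw [← hS]
  exact cnj_a_pow_mem_rist (r_mem_rist hp) i.val

lemma pbra_cnj_sFG_pow_eq_one (hp : 3 ≤ p) {i j : ZMod p} (n m : ℕ) (h0 : i - j ≠ 0)
    (h1 : i - j ≠ 1) (hm1 : i - j ≠ -1) :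
    pbra (cnj (sFG p hp i) (sFG p hp (i - 1) ^ n)) (cnj (sFG p hp j) (sFG p hp (j - 1) ^ m)) =
      1 := by
  have hdisj : Disjoint ({-i, 1 - i} : Set (ZMod p)) {-j, 1 - j} := by
    simp only [Set.disjoint_insert_left, Set.disjoint_singleton_left, Set.mem_insert_iff,
      Set.mem_singleton_iff, not_or]
    refine ⟨⟨fun h => h0 ?_, fun h => hm1 ?_⟩, fun h => h1 ?_, fun h => h0 ?_⟩ <;>
      linear_combination -h
  exact pbra_eq_one_of_commute <| commute_of_mem_rist_of_disjoint
    (cnj_mem_rist (sFG_mem_rist hp i) (pow_mem (sFG_mem_rist hp (i - 1)) n))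
    (cnj_mem_rist (sFG_mem_rist hp j) (pow_mem (sFG_mem_rist hp (j - 1)) m)) hdisj

lemma cnj_sFG_pow_succ (hp : 3 ≤ p) (i : ZMod p) (n m : ℕ) :
    cnj (sFG p hp i) (sFG p hp (i - 1) ^ (n + 1)) =
      cnj (sFG p hp i)
        (sFG p hp (i - 1) ^ n * cnj (sFG p hp (i - 1)) (sFG p hp (i - 2) ^ m)) := by
  have one_ne : (1 : ZMod p) ≠ 0 := by
    exact_mod_cast ZMod.natCast_ne_zero_of_pos_of_lt (k := 1) one_pos (by omega)
  have two_ne : (2 : ZMod p) ≠ 0 := by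
    exact_mod_cast ZMod.natCast_ne_zero_of_pos_of_lt (k := 2) two_pos hp
  set s := sFG p hp (i - 1)
  set t := cnj s (sFG p hp (i - 2) ^ m)
  set G := cnj (sFG p hp i) (s ^ n)
  have hs : s ∈ rist (insert (1 - i) {2 - i}) := by
    have := sFG_mem_rist hp (i - 1)
    rwa [show -(i - 1) = 1 - i by ring, show 1 - (i - 1) = 2 - i by ring] at this
  have hfix : 1 - i ∉ ({-(i - 2), 1 - (i - 2)} : Set (ZMod p)) := by
    simp only [Set.mem_insert_iff, Set.mem_singleton_iff, not_or]
    exact ⟨fun h => one_ne (by linear_combination -h), fun h => two_ne (by linear_combination -h)⟩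
  have hpow := pow_mem (sFG_mem_rist hp (i - 2)) m
  have hts : t * s⁻¹ ∈ rist {2 - i} :=
    mul_inv_mem_rist_of_eqOn_cons (cnj_mem_rist hs hpow) hs
      (cnj_apply_cons_of_notMem hs hpow hfix)
  have hG : G ∈ rist {-i, 1 - i} := cnj_mem_rist (sFG_mem_rist hp i) (pow_mem hs n)
  have hdisj : Disjoint ({-i, 1 - i} : Set (ZMod p)) {2 - i} := by
    simp only [Set.disjoint_singleton_right, Set.mem_insert_iff, Set.mem_singleton_iff, not_or]
    exact ⟨fun h => two_ne (by linear_combination h), fun h => one_ne (by linear_combination h)⟩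
  calc cnj (sFG p hp i) (s ^ (n + 1)) = cnj G s := by rw [pow_succ, cnj_mul]
    _ = cnj (cnj G (t * s⁻¹)) s := by
      rw [cnj_eq_self_of_commute (commute_of_mem_rist_of_disjoint hG hts hdisj)]
    _ = cnj (sFG p hp i) (s ^ n * t) := by rw [← cnj_mul, inv_mul_cancel_right, cnj_mul]

end SelfSim

/-- In the generalized Fabrykowski-Gupta group `Γ_p`, with
`sᵢ = r^{aⁱ}` for `i ∈ ℤ/pℤ`, the following relations hold: `a^p = 1`;
`[sᵢ^{s_{i-1}ⁿ}, sⱼ^{s_{j-1}^m}] = 1` whenever `2 ≤ |i-j| ≤ p-2`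
(equivalently `i - j ∉ {0, 1, -1}` in `ℤ/pℤ`) and `m, n ≥ 0`; and
`sᵢ^{s_{i-1}^{n+1}} = sᵢ^{s_{i-1}ⁿ·s_{i-1}^{s_{i-2}^m}}` for all `i ∈ ℤ/pℤ`
and `m, n ≥ 0`. -/
theorem fabrykowskiGupta_relations (p : ℕ) (hp : 3 ≤ p) :
    SelfSim.a p ^ p = 1 ∧
    (∀ (i j : ZMod p) (n m : ℕ), i - j ≠ 0 → i - j ≠ 1 → i - j ≠ -1 →
      pbra (cnj (sFG p hp i) (sFG p hp (i - 1) ^ n))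
        (cnj (sFG p hp j) (sFG p hp (j - 1) ^ m)) = 1) ∧
    (∀ (i : ZMod p) (n m : ℕ),
      cnj (sFG p hp i) (sFG p hp (i - 1) ^ (n + 1)) =
        cnj (sFG p hp i) (sFG p hp (i - 1) ^ n *
          cnj (sFG p hp (i - 1)) (sFG p hp (i - 2) ^ m))) :=
  ⟨SelfSim.a_pow_eq_one, fun _ _ n m => SelfSim.pbra_cnj_sFG_pow_eq_one hp n m,
    SelfSim.cnj_sFG_pow_succ hp⟩
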